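/- arXiv:2410.19106 — 9 statements merged into one kernel-verified Lean document; each statement's English description precedes it below -/
import Mathlib

section
/- If V > g > 0 and r1 = r2 = 0, then in the N-player common-value all-pay auction with minimum bid g, value V, and full refunds on losing bids, an ordered pure strategy profile b_1 ≤ ... ≤ b_N (with abstentions represented by bids below zero) is a Nash equilibrium if and only if b_{N-1} = b_N = V - g. Formally: the profile where losers pay nothing and the winner gains V - g - b_w is an equilibrium exactly when the top two bids both equal V - g. -/
open Classical in
/-- Payoff of agent `i` in the `N`-player common-value all-pay auction with value `V`,
minimum bid (base fee) `g`, and revert penalty rates `r1, r2`.  A strategy is `none`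
(abstain) or `some x` (bid `x`).  The highest bidder(s) win, ties broken uniformly,
so a top bidder gets `(V - g - x)` with probability `1/k` (where `k` is the number of
tied top bids) and pays the revert cost otherwise; losers pay `r1*g + r2*x`. -/
noncomputable def payoff (N : ℕ) (V g r1 r2 : ℝ) (b : Fin N → Option ℝ) (i : Fin N) : ℝ :=
  match b i with
  | none => 0
  | some x =>
    if ∀ j, ∀ y ∈ b j, y ≤ x then
      (V - g - x) * (1 / ((Finset.univ.filter fun j => b j = some x).card : ℝ))
        - (r1 * g + r2 * x) * (1 - 1 / ((Finset.univ.filter fun j => b j = some x).card : ℝ))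
    else -(r1 * g + r2 * x)

/-- All submitted bids are nonnegative. -/
def ValidProfile (N : ℕ) (b : Fin N → Option ℝ) : Prop := ∀ i, ∀ x ∈ b i, (0:ℝ) ≤ x

/-- Nash equilibrium: no agent can strictly improve by a unilateral (valid) deviation. -/
def IsNash (N : ℕ) (V g r1 r2 : ℝ) (b : Fin N → Option ℝ) : Prop :=
  ValidProfile N b ∧ ∀ i : Fin N, ∀ a : Option ℝ, (∀ x ∈ a, (0:ℝ) ≤ x) →
    payoff N V g r1 r2 (Function.update b i a) i ≤ payoff N V g r1 r2 b i

lemma payoff_none' {N : ℕ} {V g r1 r2 : ℝ} {b : Fin N → Option ℝ} {i : Fin N}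
    (h : b i = none) : payoff N V g r1 r2 b i = 0 := by
  simp [payoff, h]

lemma payoff_some' {N : ℕ} {V g : ℝ} {b : Fin N → Option ℝ} {i : Fin N} {x : ℝ}
    (h : b i = some x) :
    payoff N V g 0 0 b i =
      if (∀ j, ∀ y ∈ b j, y ≤ x) then
        (V - g - x) * (1 / ((Finset.univ.filter fun j => b j = some x).card : ℝ))
      else 0 := by
  simp [payoff, h]

lemma payoff_unique' {N : ℕ} {V g : ℝ} {b : Fin N → Option ℝ} {i : Fin N} {x : ℝ}
    (h : b i = some x) (htop : ∀ j, ∀ y ∈ b j, y ≤ x)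
    (huniq : ∀ j, j ≠ i → b j ≠ some x) :
    payoff N V g 0 0 b i = V - g - x := by
  rw [payoff_some' h, if_pos htop]
  have hst : (Finset.univ.filter fun j => b j = some x) = {i} := by
    ext j
    simp only [Finset.mem_filter, Finset.mem_univ, true_and, Finset.mem_singleton]
    constructor
    · intro hj; by_contra hne; exact huniq j hne hj
    · rintro rfl; exact h
  rw [hst]; simp

lemma card_pos' {N : ℕ} {b : Fin N → Option ℝ} {i : Fin N} {x : ℝ} (h : b i = some x) :
    0 < (((Finset.univ.filter fun j => b j = some x).card : ℝ)) := by
  have : i ∈ Finset.univ.filter fun j => b j = some x := by simp [h]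
  have := Finset.card_pos.mpr ⟨i, this⟩
  exact_mod_cast this

/-- With full revert protection (`r1 = r2 = 0`), a valid profile is a Nash equilibrium
iff all bids are at most `V - g` and at least two agents bid exactly `V - g`
(i.e. the top two bids both equal `V - g`). -/
theorem stmt0 (N : ℕ) (hN : 2 ≤ N) (V g : ℝ) (hg : 0 < g) (hVg : g < V)
    (b : Fin N → Option ℝ) (hb : ValidProfile N b) :
    IsNash N V g 0 0 b ↔
      ((∀ k, ∀ y ∈ b k, y ≤ V - g) ∧
        ∃ i j : Fin N, i ≠ j ∧ b i = some (V - g) ∧ b j = some (V - g)) := by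
  have hVg0 : 0 < V - g := by linarith
  constructor
  · rintro ⟨hval, hnash⟩
    haveI : NeZero N := ⟨by omega⟩
    have hne : (Finset.univ : Finset (Fin N)).Nonempty := Finset.univ_nonempty
    set f : Fin N → ℝ := fun j => (b j).getD 0 with hf
    set m := Finset.univ.sup' hne f with hm
    have hf0 : ∀ j, 0 ≤ f j := by
      intro j
      cases hj : b j with
      | none => simp [hf, hj]
      | some y => simpa [hf, hj] using hb j y hj
    have hfm : ∀ j, f j ≤ m := fun j => Finset.le_sup' f (Finset.mem_univ j)
    have hfval : ∀ j y, b j = some y → f j = y := by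
      intro j y hjy; simp [hf, hjy]
    have hbm : ∀ j, ∀ y ∈ b j, y ≤ m := by
      intro j y hy
      have := hfval j y hy
      linarith [hfm j]
    have hm0 : 0 ≤ m := le_trans (hf0 ⟨0, by omega⟩) (hfm _)
    -- Part 1: m ≤ V - g
    have hmVg : m ≤ V - g := by
      by_contra hlt
      push_neg at hlt
      obtain ⟨j, -, hj⟩ := Finset.exists_mem_eq_sup' hne f
      rw [← hm] at hj
      have hbj : b j = some m := by
        cases hjb : b j with
        | none =>
          exfalso
          have hz : f j = 0 := by simp [hf, hjb]
          rw [hj, hz] at hlt; linarith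
        | some y =>
          have hy := hfval j y hjb
          rw [hj, hy]
      have hpj : payoff N V g 0 0 b j =
          (V - g - m) * (1 / ((Finset.univ.filter fun k => b k = some m).card : ℝ)) := by
        rw [payoff_some' hbj, if_pos hbm]
      have hdev := hnash j none (by simp)
      rw [payoff_none' (by simp : (Function.update b j none) j = none), hpj] at hdev
      have hcp := card_pos' hbj
      nlinarith [hdev, hcp, mul_pos (by linarith : (0:ℝ) < m - (V - g)) (one_div_pos.mpr hcp)]
    have hle : ∀ k, ∀ y ∈ b k, y ≤ V - g := fun k y hy => le_trans (hbm k y hy) hmVg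
    refine ⟨hle, ?_⟩
    -- Part 2: by contradiction, at most one agent bids V - g
    by_contra hcon
    have hatmost : ∀ i j : Fin N, b i = some (V - g) → b j = some (V - g) → i = j := by
      intro i j hi hj
      by_contra hij
      exact hcon ⟨i, j, hij, hi, hj⟩
    rcases eq_or_lt_of_le hmVg with hmeq | hmlt
    · -- m = V - g : the unique top bidder can lower its bid
      obtain ⟨j, -, hj⟩ := Finset.exists_mem_eq_sup' hne f
      rw [← hm] at hj
      have hbj : b j = some (V - g) := by
        cases hjb : b j with
        | none =>
          exfalso
          have hz : f j = 0 := by simp [hf, hjb]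
          rw [hz] at hj
          rw [hj] at hmeq; linarith
        | some y =>
          have hy := hfval j y hjb
          have hyv : y = V - g := by rw [← hy, ← hj, hmeq]
          rw [hyv]
      -- sup of others
      set f' : Fin N → ℝ := fun k => if k = j then 0 else f k with hf'
      set m' := Finset.univ.sup' hne f' with hm'
      have hm'0 : 0 ≤ m' := by
        have : f' j ≤ m' := Finset.le_sup' f' (Finset.mem_univ j)
        simpa [hf'] using this
      have hm'lt : m' < V - g := by
        have : Finset.univ.sup' hne f' < V - g := by
          rw [Finset.sup'_lt_iff]
          intro k _
          by_cases hk : k = j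
          · simp only [hf', if_pos hk]; linarith
          · simp only [hf', if_neg hk]
            cases hkb : b k with
            | none =>
              have hz : f k = 0 := by simp [hf, hkb]
              rw [hz]; linarith
            | some z =>
              rw [hfval k z hkb]
              rcases lt_or_eq_of_le (hle k z hkb) with h | h
              · exact h
              · exact absurd (hatmost k j (h ▸ hkb) hbj) hk
        rw [hm']; exact this
      set x := (m' + (V - g)) / 2 with hx
      have hxm : m' < x := by rw [hx]; linarith
      have hxV : x < V - g := by rw [hx]; linarith
      have hx0 : 0 ≤ x := by linarith
      have hother : ∀ k, k ≠ j → ∀ z ∈ b k, z ≤ m' := by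
        intro k hk z hz
        have := hfval k z hz
        have hle' : f' k ≤ m' := Finset.le_sup' f' (Finset.mem_univ k)
        rw [hf'] at hle'
        simp only [if_neg hk] at hle'
        linarith
      set b' := Function.update b j (some x) with hb'
      have hb'j : b' j = some x := by simp [hb']
      have hb'k : ∀ k, k ≠ j → b' k = b k := by
        intro k hk; simp [hb', Function.update_of_ne hk]
      have hnew : payoff N V g 0 0 b' j = V - g - x := by
        apply payoff_unique' hb'j
        · intro k z hz
          by_cases hk : k = j
          · subst hk; rw [hb'j] at hz; simp at hz; linarith [hz]
          · rw [hb'k k hk] at hz; linarith [hother k hk z hz]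
        · intro k hk
          rw [hb'k k hk]
          intro hkx
          have := hother k hk x hkx
          linarith
      have hold : payoff N V g 0 0 b j = 0 := by
        rw [payoff_unique' (V := V) (g := g) hbj (by intro k z hz; exact hle k z hz)
          (fun k hk hkeq => hk (hatmost k j hkeq hbj))]
        ring
      have := hnash j (some x) (by intro z hz; simp at hz; linarith [hz])
      rw [hnew, hold] at this
      linarith
    · -- m < V - g : someone can win outright with a bid in (m, V-g)
      have hex : ∃ j : Fin N, payoff N V g 0 0 b j < V - g - m := by
        set i1 : Fin N := ⟨0, by omega⟩ with hi1
        set i2 : Fin N := ⟨1, by omega⟩ with hi2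
        have h12 : i1 ≠ i2 := by simp [hi1, hi2, Fin.ext_iff]
        by_cases h1 : payoff N V g 0 0 b i1 < V - g - m
        · exact ⟨i1, h1⟩
        push_neg at h1
        have hpos : 0 < payoff N V g 0 0 b i1 := lt_of_lt_of_le (by linarith) h1
        -- i1 must be the unique top bidder at m
        cases hb1 : b i1 with
        | none => rw [payoff_none' hb1] at hpos; linarith
        | some y =>
          by_cases htop : ∀ k, ∀ z ∈ b k, z ≤ y
          · have hym : y = m := by
              have h1' : y ≤ m := hbm i1 y hb1
              have h2' : m ≤ y := by
                rw [hm]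
                apply Finset.sup'_le
                intro k _
                cases hkb : b k with
                | none =>
                  have hz : f k = 0 := by simp [hf, hkb]
                  rw [hz]
                  exact hb i1 y hb1
                | some z =>
                  rw [hfval k z hkb]
                  exact htop k z hkb
              linarith
            subst hym
            rw [payoff_some' hb1, if_pos htop] at hpos h1
            have hcp := card_pos' hb1
            set c := ((Finset.univ.filter fun k => b k = some m).card : ℝ) with hc
            have hi2ne : b i2 ≠ some m := by
              intro hbi2
              have hmem1 : i1 ∈ Finset.univ.filter fun k => b k = some m := by simp [hb1]
              have hmem2 : i2 ∈ Finset.univ.filter fun k => b k = some m := by simp [hbi2]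
              have h2n : 2 ≤ (Finset.univ.filter fun k => b k = some m).card :=
                Finset.one_lt_card.mpr ⟨i1, hmem1, i2, hmem2, h12⟩
              have h2r : (2:ℝ) ≤ c := by rw [hc]; exact_mod_cast h2n
              have hinv : 1 / c ≤ 1 / 2 := by
                apply one_div_le_one_div_of_le <;> linarith
              have hmul : (V - g - m) * (1 / c) ≤ (V - g - m) * (1 / 2) :=
                mul_le_mul_of_nonneg_left hinv (by linarith)

              linarith
            refine ⟨i2, ?_⟩
            cases hb2 : b i2 with
            | none => rw [payoff_none' hb2]; linarith
            | some z =>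
              have hzy : z < m := lt_of_le_of_ne (hbm i2 z hb2) (fun h => hi2ne (h ▸ hb2))
              have hnt : ¬ ∀ k, ∀ w ∈ b k, w ≤ z := by
                intro hh
                exact absurd (hh i1 m hb1) (not_le.mpr hzy)
              rw [payoff_some' hb2, if_neg hnt]; linarith
          · rw [payoff_some' hb1, if_neg htop] at hpos; linarith
      obtain ⟨j, hpj⟩ := hex
      set p := max (payoff N V g 0 0 b j) 0 with hp
      have hp0 : 0 ≤ p := le_max_right _ _
      have hpm : p < V - g - m := by
        rw [hp]; exact max_lt hpj (by linarith)
      set x := (m + (V - g - p)) / 2 with hx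
      have hxm : m < x := by rw [hx]; linarith
      have hxp : V - g - x > p := by rw [hx]; linarith
      have hx0 : 0 ≤ x := by linarith
      set b' := Function.update b j (some x) with hb'
      have hb'j : b' j = some x := by simp [hb']
      have hb'k : ∀ k, k ≠ j → b' k = b k := by
        intro k hk; simp [hb', Function.update_of_ne hk]
      have hnew : payoff N V g 0 0 b' j = V - g - x := by
        apply payoff_unique' hb'j
        · intro k z hz
          by_cases hk : k = j
          · subst hk; rw [hb'j] at hz; simp at hz; linarith [hz]
          · rw [hb'k k hk] at hz; linarith [hbm k z hz]
        · intro k hk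
          rw [hb'k k hk]
          intro hkx
          have := hbm k x hkx
          linarith
      have := hnash j (some x) (by intro z hz; simp at hz; linarith [hz])
      rw [hnew] at this
      have hple : payoff N V g 0 0 b j ≤ p := le_max_left _ _
      linarith
  · rintro ⟨hle, i, j, hij, hbi, hbj⟩
    refine ⟨hb, ?_⟩
    intro l a ha
    have hold : payoff N V g 0 0 b l = 0 := by
      cases hl : b l with
      | none => exact payoff_none' hl
      | some y =>
        by_cases htop : ∀ k, ∀ z ∈ b k, z ≤ y
        · have h1 : V - g ≤ y := htop i (V - g) hbi
          have h2 : y ≤ V - g := hle l y hl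
          have hy : y = V - g := le_antisymm h2 h1
          rw [payoff_some' hl, if_pos htop, hy]
          ring
        · rw [payoff_some' hl, if_neg htop]
    rw [hold]
    obtain ⟨w, hwl, hw⟩ : ∃ w, w ≠ l ∧ b w = some (V - g) := by
      rcases eq_or_ne i l with rfl | h
      · exact ⟨j, fun h' => hij h'.symm, hbj⟩
      · exact ⟨i, h, hbi⟩
    cases a with
    | none =>
      rw [payoff_none' (by simp : (Function.update b l none) l = none)]
    | some x =>
      have hb'l : (Function.update b l (some x)) l = some x := by simp
      by_cases htop : ∀ k, ∀ z ∈ (Function.update b l (some x)) k, z ≤ x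
      · have hVgx : V - g ≤ x := by
          have : (Function.update b l (some x)) w = some (V - g) := by
            rw [Function.update_of_ne hwl]; exact hw
          exact htop w (V - g) this
        rw [payoff_some' hb'l, if_pos htop]
        apply mul_nonpos_of_nonpos_of_nonneg
        · linarith
        · positivity
      · rw [payoff_some' hb'l, if_neg htop]
end

section
/- Let V > g > 0, r1 ∈ (0,1], r2 ∈ [0,1], and N ≥ 2. Define p* = (r1*g/(V - g + r1*g))^(1/(N-1)) and F*(b) = (1/(1-p*)) * ((r1*g + r2*b)/(V - g - b + r1*g + r2*b))^(1/(N-1)) - p*/(1-p*) for b ∈ [0, V-g]. Then F* satisfies F*(0) = 0, F*(V-g) = 1, and F* is monotone nondecreasing on [0, V-g], so it is a valid CDF. -/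
/-- With `r1 > 0`, the equilibrium bid distribution `F*` is a valid CDF on `[0, V-g]`:
`F*(0) = 0`, `F*(V-g) = 1`, and `F*` is monotone nondecreasing on `[0, V-g]`. -/
theorem stmt2 (V g r1 r2 : ℝ) (N : ℕ) (hN : 2 ≤ N)
    (hg : 0 < g) (hVg : g < V) (hr1 : 0 < r1) (hr1' : r1 ≤ 1) (hr2 : 0 ≤ r2) (hr2' : r2 ≤ 1)
    (p : ℝ)
    (hp : p = (r1 * g / (V - g + r1 * g)) ^ (1 / ((N : ℝ) - 1)))
    (F : ℝ → ℝ)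
    (hF : ∀ b, F b =
      (((r1 * g + r2 * b) / (V - g - b + r1 * g + r2 * b)) ^ (1 / ((N : ℝ) - 1)) - p) / (1 - p)) :
    F 0 = 0 ∧ F (V - g) = 1 ∧ MonotoneOn F (Set.Icc 0 (V - g)) := by
  have hN1 : (1:ℝ) ≤ (N:ℝ) - 1 := by
    have : (2:ℝ) ≤ (N:ℝ) := by exact_mod_cast hN
    linarith
  have hαpos : 0 < 1 / ((N:ℝ) - 1) := by positivity
  have hVg' : 0 < V - g := by linarith
  have hr1g : 0 < r1 * g := mul_pos hr1 hg
  have hp1 : p < 1 := by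
    rw [hp]
    apply Real.rpow_lt_one (by positivity) _ hαpos
    rw [div_lt_one (by linarith)]
    linarith
  have h1p : 0 < 1 - p := by linarith
  refine ⟨?_, ?_, ?_⟩
  · rw [hF]
    have h0 : ((r1 * g + r2 * 0) / (V - g - 0 + r1 * g + r2 * 0))
        = r1 * g / (V - g + r1 * g) := by ring_nf
    rw [h0, ← hp, sub_self, zero_div]
  · rw [hF]
    have h0 : ((r1 * g + r2 * (V - g)) / (V - g - (V - g) + r1 * g + r2 * (V - g))) = 1 := by
      rw [div_eq_one_iff_eq (by nlinarith)]
      ring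
    rw [h0, Real.one_rpow, div_self (by linarith)]
  · intro a ha b hb hab
    rw [hF, hF]
    obtain ⟨ha0, haV⟩ := ha
    obtain ⟨hb0, hbV⟩ := hb
    have hda : 0 < V - g - a + r1 * g + r2 * a := by nlinarith
    have hdb : 0 < V - g - b + r1 * g + r2 * b := by nlinarith
    have hna : 0 ≤ r1 * g + r2 * a := by nlinarith
    have hnb : 0 ≤ r1 * g + r2 * b := by nlinarith
    have key : (r1 * g + r2 * a) / (V - g - a + r1 * g + r2 * a)
        ≤ (r1 * g + r2 * b) / (V - g - b + r1 * g + r2 * b) := by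
      apply div_le_div₀ hnb (by nlinarith) hdb (by nlinarith)
    have hr : (((r1 * g + r2 * a) / (V - g - a + r1 * g + r2 * a)) ^ (1 / ((N : ℝ) - 1)))
        ≤ (((r1 * g + r2 * b) / (V - g - b + r1 * g + r2 * b)) ^ (1 / ((N : ℝ) - 1))) :=
      Real.rpow_le_rpow (by positivity) key hαpos.le
    gcongr
end

section
/- In the symmetric mixed equilibrium, for every bid b ∈ [0, V-g], the indifference condition holds: (p* + (1-p*)F*(b))^(N-1) * (V - g - b) = (1 - (p* + (1-p*)F*(b))^(N-1)) * (r1*g + r2*b), where p* = (r1*g/(V-g+r1*g))^(1/(N-1)) and F*(b) = ((( r1*g + r2*b)/(V - g - b + r1*g + r2*b))^(1/(N-1)) - p*)/(1-p*). Equivalently, p* + (1-p*)F*(b) = ((r1*g + r2*b)/(V - g - b + r1*g + r2*b))^(1/(N-1)). -/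
theorem Real.rpow_one_div_cast_sub_one_pow {x : ℝ} (hx : 0 ≤ x) {n : ℕ} (hn : 2 ≤ n) :
    (x ^ (1 / ((n : ℝ) - 1))) ^ (n - 1) = x := by
  have hcast : ((n - 1 : ℕ) : ℝ) = (n : ℝ) - 1 := Nat.cast_pred (by omega)
  rw [← hcast, one_div]
  exact Real.rpow_inv_natCast_pow hx (by omega)

theorem add_one_sub_mul_div_one_sub {K : Type*} [Field K] {p x : K} (hp : p ≠ 1) :
    p + (1 - p) * ((x - p) / (1 - p)) = x := by
  rw [mul_div_cancel₀ _ (sub_ne_zero.mpr hp.symm)]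
  ring

theorem div_add_mul_eq_one_sub_div_mul {K : Type*} [Field K] {c a : K} (h : c + a ≠ 0) :
    a / (c + a) * c = (1 - a / (c + a)) * a := by
  field_simp
  ring

theorem stmt3_general (V g r1 r2 : ℝ) (N : ℕ) (hN : 2 ≤ N)
    (hg : 0 < g) (hVg : g < V) (hr1 : 0 < r1) (hr2 : 0 ≤ r2)
    (p : ℝ)
    (hp : p = (r1 * g / (V - g + r1 * g)) ^ (1 / ((N : ℝ) - 1)))
    (F : ℝ → ℝ)
    (hF : ∀ b, F b =
      (((r1 * g + r2 * b) / (V - g - b + r1 * g + r2 * b)) ^ (1 / ((N : ℝ) - 1)) - p) / (1 - p)) :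
    ∀ b ∈ Set.Icc (0:ℝ) (V - g),
      (p + (1 - p) * F b) ^ (N - 1) * (V - g - b)
          = (1 - (p + (1 - p) * F b) ^ (N - 1)) * (r1 * g + r2 * b) ∧
        p + (1 - p) * F b
          = ((r1 * g + r2 * b) / (V - g - b + r1 * g + r2 * b)) ^ (1 / ((N : ℝ) - 1)) := by
  rintro b ⟨hb0, hbV⟩
  have hrg : 0 < r1 * g := mul_pos hr1 hg
  have hp1 : p ≠ 1 := by
    have hN1 : (0 : ℝ) < (N : ℝ) - 1 := by
      have : (2 : ℝ) ≤ N := by exact_mod_cast hN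
      linarith
    refine hp ▸ (Real.rpow_lt_one (by positivity) ?_ (by positivity)).ne
    rw [div_lt_one (by linarith)]
    linarith
  have hmix := add_one_sub_mul_div_one_sub
    (x := ((r1 * g + r2 * b) / (V - g - b + r1 * g + r2 * b)) ^ (1 / ((N : ℝ) - 1))) hp1
  rw [← hF] at hmix
  refine ⟨?_, hmix⟩
  have hD : V - g - b + r1 * g + r2 * b = (V - g - b) + (r1 * g + r2 * b) := by ring
  have hA : 0 ≤ r1 * g + r2 * b := by positivity
  rw [hmix, hD, Real.rpow_one_div_cast_sub_one_pow (by positivity) hN]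
  exact div_add_mul_eq_one_sub_div_mul (by positivity)

/-- Indifference condition of the symmetric mixed equilibrium: for every bid
`b ∈ [0, V-g]`, `(p* + (1-p*)F*(b))^(N-1) * (V-g-b)
  = (1 - (p* + (1-p*)F*(b))^(N-1)) * (r1*g + r2*b)`, and equivalently
`p* + (1-p*)F*(b) = ((r1*g + r2*b)/(V-g-b+r1*g+r2*b))^(1/(N-1))`. -/
theorem stmt3 (V g r1 r2 : ℝ) (N : ℕ) (hN : 2 ≤ N)
    (hg : 0 < g) (hVg : g < V) (hr1 : 0 < r1) (hr1' : r1 ≤ 1) (hr2 : 0 ≤ r2) (hr2' : r2 ≤ 1)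
    (p : ℝ)
    (hp : p = (r1 * g / (V - g + r1 * g)) ^ (1 / ((N : ℝ) - 1)))
    (F : ℝ → ℝ)
    (hF : ∀ b, F b =
      (((r1 * g + r2 * b) / (V - g - b + r1 * g + r2 * b)) ^ (1 / ((N : ℝ) - 1)) - p) / (1 - p)) :
    ∀ b ∈ Set.Icc (0:ℝ) (V - g),
      (p + (1 - p) * F b) ^ (N - 1) * (V - g - b)
          = (1 - (p + (1 - p) * F b) ^ (N - 1)) * (r1 * g + r2 * b) ∧
        p + (1 - p) * F b
          = ((r1 * g + r2 * b) / (V - g - b + r1 * g + r2 * b)) ^ (1 / ((N : ℝ) - 1)) :=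
  stmt3_general V g r1 r2 N hN hg hVg hr1 hr2 p hp F hF
end

section
/- Let V > g > 0, N ≥ 2, r1 ∈ (0,1], and p* = (r1*g/(V - g + r1*g))^(1/(N-1)). Then the expected auction revenue (1 - (p*)^N) * V, viewed as a function of r1 on (0,1], is strictly decreasing in r1. -/
/-- Expected auction revenue `(1 - (p*)^N) * V` is strictly decreasing in the
revert penalty rate `r1` on `(0, 1]`. -/
theorem stmt5 (V g : ℝ) (N : ℕ) (hN : 2 ≤ N) (hg : 0 < g) (hVg : g < V) :
    StrictAntiOn
      (fun r1 : ℝ =>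
        (1 - ((r1 * g / (V - g + r1 * g)) ^ (1 / ((N : ℝ) - 1))) ^ N) * V)
      (Set.Ioc 0 1) := by
  intro x hx y hy hxy
  have ha : (0:ℝ) < V - g := by linarith
  have hV : (0:ℝ) < V := by linarith
  have hdx : (0:ℝ) < V - g + x * g := by nlinarith [mul_pos hx.1 hg]
  have hdy : (0:ℝ) < V - g + y * g := by nlinarith [mul_pos (hx.1.trans hxy) hg]
  have hc : (0:ℝ) < 1 / ((N : ℝ) - 1) := by
    have : (2:ℝ) ≤ (N:ℝ) := by exact_mod_cast hN
    apply div_pos one_pos; linarith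
  have htx : (0:ℝ) < x * g / (V - g + x * g) := div_pos (mul_pos hx.1 hg) hdx
  have ht : x * g / (V - g + x * g) < y * g / (V - g + y * g) := by
    rw [div_lt_div_iff₀ hdx hdy]
    nlinarith [mul_pos (mul_pos (sub_pos.mpr hxy) hg) ha]
  have hrp : (x * g / (V - g + x * g)) ^ (1 / ((N : ℝ) - 1))
      < (y * g / (V - g + y * g)) ^ (1 / ((N : ℝ) - 1)) :=
    Real.rpow_lt_rpow (le_of_lt htx) ht hc
  have hpow : ((x * g / (V - g + x * g)) ^ (1 / ((N : ℝ) - 1))) ^ N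
      < ((y * g / (V - g + y * g)) ^ (1 / ((N : ℝ) - 1))) ^ N := by
    apply pow_lt_pow_left₀ hrp (Real.rpow_nonneg (le_of_lt htx) _)
    omega
  simp only
  apply mul_lt_mul_of_pos_right _ hV
  linarith
end

section
/- Let V > g > 0 and r1 ∈ (0,1]. Then the function N ↦ (1 - (r1*g/(V - g + r1*g))^(N/(N-1))) * V, defined for integers N ≥ 2, is strictly decreasing in N. -/
/-- Expected revenue `(1 - q^(N/(N-1))) * V`, with `q = r1*g/(V-g+r1*g)`,
is strictly decreasing in the integer number of bidders `N ≥ 2`. -/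
theorem stmt6 (V g r1 : ℝ) (hg : 0 < g) (hVg : g < V) (hr1 : 0 < r1) (hr1' : r1 ≤ 1) :
    ∀ N : ℕ, 2 ≤ N →
      (1 - (r1 * g / (V - g + r1 * g)) ^ (((N : ℝ) + 1) / ((N : ℝ)))) * V
        < (1 - (r1 * g / (V - g + r1 * g)) ^ ((N : ℝ) / ((N : ℝ) - 1))) * V := by
  intro N hN
  have hNR : (2 : ℝ) ≤ (N : ℝ) := by exact_mod_cast hN
  have hden : 0 < V - g + r1 * g := by nlinarith
  set q : ℝ := r1 * g / (V - g + r1 * g) with hq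
  have hq0 : 0 < q := div_pos (by positivity) hden
  have hq1 : q < 1 := by
    rw [hq, div_lt_one hden]; nlinarith
  have hNpos : (0 : ℝ) < (N : ℝ) := by linarith
  have hN1 : (0 : ℝ) < (N : ℝ) - 1 := by linarith
  have hexp : ((N : ℝ) + 1) / (N : ℝ) < (N : ℝ) / ((N : ℝ) - 1) := by
    rw [div_lt_div_iff₀ hNpos hN1]; nlinarith
  have := Real.rpow_lt_rpow_of_exponent_gt hq0 hq1 hexp
  have hV : 0 < V := lt_trans hg hVg
  nlinarith [this]
end

section
/- Let V > g > 0, N ≥ 2, r1 ∈ (0,1]. The equilibrium abstention probability p* = (r1*g/(V - g + r1*g))^(1/(N-1)) is: strictly increasing in N (i.e., p*(N+1) > p*(N) for all N ≥ 2), strictly increasing in g on (0, V), strictly increasing in r1 on (0,1], and strictly decreasing in V on (g, ∞). -/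
/-- Comparative statics of the equilibrium abstention probability
`p*(N,V,g,r1) = (r1*g/(V-g+r1*g))^(1/(N-1))`: it is strictly increasing in `N` (for
integers `N ≥ 2`), strictly increasing in `g` on `(0,V)`, strictly increasing in `r1`
on `(0,1]`, and strictly decreasing in `V` on `(g,∞)`. -/
theorem stmt12 (V g r1 : ℝ) (N : ℕ) (hN : 2 ≤ N)
    (hg : 0 < g) (hVg : g < V) (hr1 : 0 < r1) (hr1' : r1 ≤ 1)
    (p : ℕ → ℝ → ℝ → ℝ → ℝ)
    (hp : ∀ (M : ℕ) (W h s : ℝ),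
      p M W h s = (s * h / (W - h + s * h)) ^ (1 / ((M : ℝ) - 1))) :
    (∀ M : ℕ, 2 ≤ M → p M V g r1 < p (M + 1) V g r1) ∧
      StrictMonoOn (fun h : ℝ => p N V h r1) (Set.Ioo 0 V) ∧
      StrictMonoOn (fun s : ℝ => p N V g s) (Set.Ioc 0 1) ∧
      StrictAntiOn (fun W : ℝ => p N W g r1) (Set.Ioi g) := by
  have hNz : (0:ℝ) < 1 / ((N : ℝ) - 1) := by
    have : (2:ℝ) ≤ (N:ℝ) := by exact_mod_cast hN
    have : (0:ℝ) < (N:ℝ) - 1 := by linarith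
    positivity
  refine ⟨?_, ?_, ?_, ?_⟩
  · intro M hM
    rw [hp, hp]
    have hden : 0 < V - g + r1 * g := by nlinarith
    have hb0 : 0 < r1 * g / (V - g + r1 * g) := by positivity
    have hb1 : r1 * g / (V - g + r1 * g) < 1 := by
      rw [div_lt_one hden]; nlinarith
    apply Real.rpow_lt_rpow_of_exponent_gt hb0 hb1
    have hM1 : (2:ℝ) ≤ (M:ℝ) := by exact_mod_cast hM
    push_cast
    rw [div_lt_div_iff₀ (by linarith) (by linarith)]
    linarith
  · intro a ha b hb hab
    simp only [hp]
    obtain ⟨ha0, haV⟩ := ha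
    obtain ⟨hb0, hbV⟩ := hb
    have hda : 0 < V - a + r1 * a := by nlinarith
    have hdb : 0 < V - b + r1 * b := by nlinarith
    apply Real.rpow_lt_rpow (by positivity) _ hNz
    rw [div_lt_div_iff₀ hda hdb]
    nlinarith [mul_pos (mul_pos hr1 (sub_pos.mpr hab)) (lt_trans hg hVg)]
  · intro a ha b hb hab
    simp only [hp]
    obtain ⟨ha0, _⟩ := ha
    obtain ⟨hb0, _⟩ := hb
    have hda : 0 < V - g + a * g := by nlinarith
    have hdb : 0 < V - g + b * g := by nlinarith
    apply Real.rpow_lt_rpow (by positivity) _ hNz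
    rw [div_lt_div_iff₀ hda hdb]
    nlinarith [mul_pos (mul_pos hg (sub_pos.mpr hab)) (sub_pos.mpr hVg)]
  · intro a ha b hb hab
    simp only [hp]
    simp only [Set.mem_Ioi] at ha hb
    have hda : 0 < a - g + r1 * g := by nlinarith
    have hdb : 0 < b - g + r1 * g := by nlinarith
    apply Real.rpow_lt_rpow (by positivity) _ hNz
    rw [div_lt_div_iff₀ hdb hda]
    nlinarith [mul_pos (mul_pos hr1 hg) (sub_pos.mpr hab)]
end

section
/- Let V > g > 0, N ≥ 2, r1 ∈ (0,1], and fix b ∈ (0, V-g). Then the equilibrium CDF value F*(b) = ((( r1*g + r2*b)/(V - g - b + r1*g + r2*b))^(1/(N-1)) - p*)/(1 - p*), with p* = (r1*g/(V-g+r1*g))^(1/(N-1)), is nondecreasing in r2 on [0,1]. Consequently, if B_{r2} denotes a random variable with CDF F*(·; r2), then E[B_{r2}] is nonincreasing in r2 (first-order stochastic dominance). -/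
/-- For fixed `b ∈ (0, V-g)`, the equilibrium CDF value `F*(b; r2)` is nondecreasing
in `r2` on `[0,1]`.  Consequently (first-order stochastic dominance), the expectation
`E[B_{r2}] = ∫_0^{V-g} (1 - F*(b; r2)) db` of a random variable supported on
`[0, V-g]` with CDF `F*(·; r2)` is nonincreasing in `r2`. -/
theorem stmt13 (V g r1 : ℝ) (N : ℕ) (hN : 2 ≤ N)
    (hg : 0 < g) (hVg : g < V) (hr1 : 0 < r1) (hr1' : r1 ≤ 1)
    (p : ℝ) (hp : p = (r1 * g / (V - g + r1 * g)) ^ (1 / ((N : ℝ) - 1)))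
    (F : ℝ → ℝ → ℝ)
    (hF : ∀ r2 b, F r2 b =
      (((r1 * g + r2 * b) / (V - g - b + r1 * g + r2 * b)) ^ (1 / ((N : ℝ) - 1)) - p)
        / (1 - p)) :
    (∀ b ∈ Set.Ioo (0:ℝ) (V - g), MonotoneOn (fun r2 => F r2 b) (Set.Icc 0 1)) ∧
      AntitoneOn (fun r2 => ∫ b in (0:ℝ)..(V - g), (1 - F r2 b)) (Set.Icc 0 1) := by
  have hVgpos : (0:ℝ) < V - g := sub_pos.mpr hVg
  have hr1g : (0:ℝ) < r1 * g := mul_pos hr1 hg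
  have hc : (0:ℝ) < 1 / ((N : ℝ) - 1) := by
    have : (2:ℝ) ≤ (N : ℝ) := by exact_mod_cast hN
    have : (0:ℝ) < (N : ℝ) - 1 := by linarith
    positivity
  have hp1 : p < 1 := by
    rw [hp]
    apply Real.rpow_lt_one
    · positivity
    · rw [div_lt_one (by linarith)]; linarith
    · exact hc
  have h1p : (0:ℝ) < 1 - p := by linarith
  -- positivity of denominators
  have hD : ∀ r ∈ Set.Icc (0:ℝ) 1, ∀ b ∈ Set.Icc (0:ℝ) (V - g),
      0 < V - g - b + r1 * g + r * b := by
    intro r hr b hb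
    have := hr.1; have := hb.1; have := hb.2
    nlinarith [mul_nonneg hr.1 hb.1]
  -- key pointwise monotonicity in r2
  have key : ∀ b ∈ Set.Icc (0:ℝ) (V - g), ∀ r ∈ Set.Icc (0:ℝ) 1, ∀ s ∈ Set.Icc (0:ℝ) 1,
      r ≤ s → F r b ≤ F s b := by
    intro b hb r hr s hs hrs
    rw [hF, hF]
    have hDr := hD r hr b hb
    have hDs := hD s hs b hb
    have hratio : (r1 * g + r * b) / (V - g - b + r1 * g + r * b)
        ≤ (r1 * g + s * b) / (V - g - b + r1 * g + s * b) := by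
      rw [div_le_div_iff₀ hDr hDs]
      nlinarith [mul_nonneg (mul_nonneg (sub_nonneg.2 hrs) hb.1) (sub_nonneg.2 hb.2)]
    have hrpow := Real.rpow_le_rpow
      (div_nonneg (by nlinarith [mul_nonneg hr.1 hb.1]) hDr.le) hratio hc.le
    gcongr
    all_goals first | linarith | exact hrpow
  constructor
  · intro b hb
    intro r hr s hs hrs
    exact key b ⟨hb.1.le, hb.2.le⟩ r hr s hs hrs
  · -- integrability via continuity
    have hint : ∀ r ∈ Set.Icc (0:ℝ) 1,
        IntervalIntegrable (fun b => 1 - F r b) MeasureTheory.volume 0 (V - g) := by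
      intro r hr
      apply ContinuousOn.intervalIntegrable
      rw [Set.uIcc_of_le hVgpos.le]
      have hcont : ContinuousOn (fun b => 1 - F r b) (Set.Icc 0 (V - g)) := by
        have : ∀ b ∈ Set.Icc (0:ℝ) (V - g), (1 - F r b) =
            (1 - (((r1 * g + r * b) / (V - g - b + r1 * g + r * b)) ^ (1 / ((N : ℝ) - 1)) - p)
              / (1 - p)) := by
          intro b hb; rw [hF]
        apply ContinuousOn.congr _ this
        apply continuousOn_const.sub
        apply ContinuousOn.div_const
        apply ContinuousOn.sub _ continuousOn_const
        apply ContinuousOn.rpow_const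
        · exact (continuousOn_const.add ((continuous_mul_left r).continuousOn)).div
            (((continuousOn_const.sub continuousOn_id).add continuousOn_const).add
              ((continuous_mul_left r).continuousOn))
            (fun b hb => (hD r hr b hb).ne')
        · intro x hx; exact Or.inr hc.le
      exact hcont
    intro r hr s hs hrs
    apply intervalIntegral.integral_mono_on hVgpos.le (hint s hs) (hint r hr)
    intro b hb
    exact sub_le_sub_left (key b hb r hr s hs hrs) 1
end

section
/- Let V > g > 0, 0 < c ≤ g, and N ≥ 2. Consider f(r1) = (1 - (p(r1))^N)*V - c*(1 - p(r1))*N for r1 ∈ (0,1], where p(r1) = (r1*g/(V - g + r1*g))^(1/(N-1)). Then f is maximized at r1* = c*(V-g)/((V-c)*g), at which point p(r1*) = (c/V)^(1/(N-1)). (Note r1* ∈ (0,1] since c ≤ g < V.) -/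
/-- Tangent line inequality for `x ^ n` at `a`, for nonnegative reals. -/
lemma tangent_pow (n : ℕ) (a b : ℝ) (ha : 0 ≤ a) (hb : 0 ≤ b) :
    (n : ℝ) * a ^ (n - 1) * (b - a) ≤ b ^ n - a ^ n := by
  induction n with
  | zero => simp
  | succ n ih =>
    rcases Nat.eq_zero_or_pos n with rfl | hn
    · simp
    · have h1 : b * ((n : ℝ) * a ^ (n - 1) * (b - a)) ≤ b * (b ^ n - a ^ n) :=
        mul_le_mul_of_nonneg_left ih hb
      have h2 : 0 ≤ (n : ℝ) * a ^ (n - 1) * (b - a) ^ 2 := by positivity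
      have haa : a ^ (n - 1) * a = a ^ n := by
        rw [← pow_succ]; congr 1; omega
      have hbb : b ^ (n + 1) = b ^ n * b := pow_succ b n
      have haa1 : a ^ (n + 1) = a ^ n * a := pow_succ a n
      have hsub : (n + 1) - 1 = n := rfl
      rw [← haa] at h1
      rw [hsub, hbb, haa1, ← haa]
      push_cast
      nlinarith [h1, h2]

/-- Scheme 1 (sequencer internalizes the per-transaction cost `c`): the expected profit
`f(r1) = (1 - p(r1)^N)*V - c*(1 - p(r1))*N` on `(0,1]`, with
`p(r1) = (r1*g/(V-g+r1*g))^(1/(N-1))`, is maximized at `r1* = c*(V-g)/((V-c)*g)`,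
which lies in `(0,1]`, and there `p(r1*) = (c/V)^(1/(N-1))`. -/
theorem stmt14 (V g c : ℝ) (N : ℕ) (hN : 2 ≤ N)
    (hg : 0 < g) (hVg : g < V) (hc : 0 < c) (hcg : c ≤ g)
    (p f : ℝ → ℝ)
    (hp : ∀ r1, p r1 = (r1 * g / (V - g + r1 * g)) ^ (1 / ((N : ℝ) - 1)))
    (hf : ∀ r1, f r1 = (1 - (p r1) ^ N) * V - c * (1 - p r1) * N)
    (r1s : ℝ) (hr1s : r1s = c * (V - g) / ((V - c) * g)) :
    r1s ∈ Set.Ioc (0:ℝ) 1 ∧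
      IsMaxOn f (Set.Ioc 0 1) r1s ∧
      p r1s = (c / V) ^ (1 / ((N : ℝ) - 1)) := by
  have hV : 0 < V := lt_trans hg hVg
  have hVc : 0 < V - c := by linarith
  have hVg' : 0 < V - g := by linarith
  have hVc' : V - c ≠ 0 := ne_of_gt hVc
  have hg' : g ≠ 0 := ne_of_gt hg
  have hr1s_pos : 0 < r1s := by rw [hr1s]; positivity
  have hr1s_le : r1s ≤ 1 := by
    rw [hr1s, div_le_one (by positivity)]
    nlinarith
  have hden : 0 < V - g + r1s * g := by nlinarith [mul_pos hr1s_pos hg]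
  have hx : r1s * g / (V - g + r1s * g) = c / V := by
    rw [div_eq_div_iff (ne_of_gt hden) (ne_of_gt hV), hr1s]
    field_simp
    ring
  have hps : p r1s = (c / V) ^ (1 / ((N : ℝ) - 1)) := by rw [hp, hx]
  refine ⟨⟨hr1s_pos, hr1s_le⟩, ?_, hps⟩
  -- the maximization part
  have hN1 : ((N : ℝ) - 1) ≠ 0 := by
    have : (2 : ℝ) ≤ (N : ℝ) := by exact_mod_cast hN
    linarith
  set a := (c / V) ^ (1 / ((N : ℝ) - 1)) with ha_def
  have ha0 : 0 ≤ a := Real.rpow_nonneg (by positivity) _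
  have haN1 : a ^ (N - 1) = c / V := by
    rw [ha_def, ← Real.rpow_natCast ((c / V) ^ (1 / ((N : ℝ) - 1))) (N - 1),
      ← Real.rpow_mul (by positivity)]
    have hcast : ((N - 1 : ℕ) : ℝ) = (N : ℝ) - 1 := by
      have : 1 ≤ N := by omega
      push_cast [Nat.cast_sub this]
      ring
    rw [hcast, one_div, inv_mul_cancel₀ hN1, Real.rpow_one]
  have hc_eq : V * a ^ (N - 1) = c := by rw [haN1]; field_simp
  rw [isMaxOn_iff]
  intro r1 hr1
  have hq0 : 0 ≤ p r1 := by
    rw [hp]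
    apply Real.rpow_nonneg
    apply div_nonneg
    · exact mul_nonneg (le_of_lt hr1.1) (le_of_lt hg)
    · nlinarith [mul_pos hr1.1 hg]
  have key := tangent_pow N a (p r1) ha0 hq0
  have key2 : V * ((N : ℝ) * a ^ (N - 1) * (p r1 - a)) ≤ V * ((p r1) ^ N - a ^ N) :=
    mul_le_mul_of_nonneg_left key (le_of_lt hV)
  rw [hf r1, hf r1s, hps, ← hc_eq]
  nlinarith [key2]
end

section
/- Let V > g > 0, N ≥ 2 and suppose all N agents play the symmetric mixed strategy (p*, F*) with p* = (r1*g/(V-g+r1*g))^(1/(N-1)), r1 ∈ (0,1], r2 ∈ [0,1]. Then for any bid b ∈ [0, V-g], the expected payoff of a single agent bidding b against N-1 independent opponents playing (p*, F*) equals zero: G(b)^(N-1)*(V - g - b) - (1 - G(b)^(N-1))*(r1*g + r2*b) = 0, where G(b) = p* + (1-p*)*F*(b); and for any b > V - g, the expected payoff is strictly negative. Hence (p*, F*) is a symmetric Nash equilibrium with zero expected payoff. -/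
/-!
With `A = r1*g + r2*b` and `B = V - g - b`, the choice of `F*` makes the winning probability
`G(b)^(N-1)` equal to `A / (B + A)`, which is exactly the probability at which the gain `B`
from winning balances the loss `A` from losing. Above `V - g` every opponent bids below `b`,
so the bidder wins for sure but pays more than the prize is worth.
-/

theorem rpow_one_div_natCast_sub_one_pow {x : ℝ} (hx : 0 ≤ x) {n : ℕ} (hn : 1 < n) :
    (x ^ (1 / ((n : ℝ) - 1))) ^ (n - 1) = x := by
  have hcast : (n : ℝ) - 1 = ((n - 1 : ℕ) : ℝ) := by
    rw [Nat.cast_sub hn.le, Nat.cast_one]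
  rw [hcast, one_div, Real.rpow_inv_natCast_pow hx (by omega)]

theorem stmt18_general (V g r1 r2 : ℝ) (N : ℕ) (hN : 2 ≤ N)
    (hg : 0 < g) (hVg : g < V) (hr1 : 0 < r1) (hr2 : 0 ≤ r2)
    (p : ℝ) (hp : p = (r1 * g / (V - g + r1 * g)) ^ (1 / ((N : ℝ) - 1)))
    (F : ℝ → ℝ)
    (hF : ∀ b, F b =
      if b ≤ V - g then
        (((r1 * g + r2 * b) / (V - g - b + r1 * g + r2 * b)) ^ (1 / ((N : ℝ) - 1)) - p)
          / (1 - p)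
      else 1)
    (G : ℝ → ℝ) (hG : ∀ b, G b = p + (1 - p) * F b) :
    (∀ b ∈ Set.Icc (0:ℝ) (V - g),
        (G b) ^ (N - 1) * (V - g - b)
          - (1 - (G b) ^ (N - 1)) * (r1 * g + r2 * b) = 0) ∧
      ∀ b : ℝ, V - g < b →
        (G b) ^ (N - 1) * (V - g - b)
          - (1 - (G b) ^ (N - 1)) * (r1 * g + r2 * b) < 0 := by
  have hN1 : (0 : ℝ) < (N : ℝ) - 1 := by
    have : (2 : ℝ) ≤ N := by exact_mod_cast hN
    linarith
  have hp_lt_one : p < 1 := by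
    rw [hp]
    refine Real.rpow_lt_one (by positivity) ?_ (by positivity)
    rw [div_lt_one (by positivity)]
    linarith
  refine ⟨fun b ⟨hb0, hb⟩ => ?_, fun b hb => ?_⟩
  · have hloss : 0 < r1 * g + r2 * b := by positivity
    have hwin : G b ^ (N - 1) = (r1 * g + r2 * b) / (V - g - b + r1 * g + r2 * b) := by
      rw [hG, hF, if_pos hb, mul_div_cancel₀ _ (sub_ne_zero.mpr hp_lt_one.ne'),
        add_sub_cancel, rpow_one_div_natCast_sub_one_pow (by positivity) hN]
    rw [hwin]
    field_simp
    ring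
  · have hwin : G b = 1 := by
      rw [hG, hF, if_neg (not_le.mpr hb)]
      ring
    rw [hwin, one_pow, sub_self, zero_mul, sub_zero, one_mul]
    linarith

/-- Verification of the symmetric mixed equilibrium `(p*, F*)`: letting
`G(b) = p* + (1-p*)F*(b)` (with `F* = 1` above `V-g`), the expected payoff of a bid
`b ∈ [0, V-g]` against `N-1` independent opponents playing `(p*, F*)` is zero,
`G(b)^(N-1)*(V-g-b) - (1 - G(b)^(N-1))*(r1*g + r2*b) = 0`, and any bid `b > V-g`
yields a strictly negative expected payoff.  Hence `(p*, F*)` is a symmetric Nash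
equilibrium with zero expected payoff. -/
theorem stmt18 (V g r1 r2 : ℝ) (N : ℕ) (hN : 2 ≤ N)
    (hg : 0 < g) (hVg : g < V) (hr1 : 0 < r1) (hr1' : r1 ≤ 1) (hr2 : 0 ≤ r2) (hr2' : r2 ≤ 1)
    (p : ℝ) (hp : p = (r1 * g / (V - g + r1 * g)) ^ (1 / ((N : ℝ) - 1)))
    (F : ℝ → ℝ)
    (hF : ∀ b, F b =
      if b ≤ V - g then
        (((r1 * g + r2 * b) / (V - g - b + r1 * g + r2 * b)) ^ (1 / ((N : ℝ) - 1)) - p)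
          / (1 - p)
      else 1)
    (G : ℝ → ℝ) (hG : ∀ b, G b = p + (1 - p) * F b) :
    (∀ b ∈ Set.Icc (0:ℝ) (V - g),
        (G b) ^ (N - 1) * (V - g - b)
          - (1 - (G b) ^ (N - 1)) * (r1 * g + r2 * b) = 0) ∧
      ∀ b : ℝ, V - g < b →
        (G b) ^ (N - 1) * (V - g - b)
          - (1 - (G b) ^ (N - 1)) * (r1 * g + r2 * b) < 0 :=
  stmt18_general V g r1 r2 N hN hg hVg hr1 hr2 p hp F hF G hG
end
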